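/- arXiv:2409.07217 — 2 statements merged into one kernel-verified Lean document; each statement's English description precedes it below -/
import Mathlib

section
/- For every natural number k there exists a constant κ > 0, depending only on k, such that for every nondegenerate triangle T in the plane, every edge e of T, and every polynomial function φ : ℝ² → ℝ of total degree at most k, one has ∫_e |φ| dH¹ ≤ κ · (|e| / |T|^{1/2}) · (∫_T φ² dx)^{1/2}. -/
open MeasureTheory

open MeasureTheory Set
open scoped ENNReal NNReal

section DegB
lemma totalDegree_bind₁_le (k : ℕ) (L : Fin 2 → MvPolynomial (Fin 2) ℝ)
    (hL : ∀ r, (L r).totalDegree ≤ 1) (P : MvPolynomial (Fin 2) ℝ)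
    (hP : P.totalDegree ≤ k) : (MvPolynomial.bind₁ L P).totalDegree ≤ k := by
  classical
  conv_lhs => rw [P.as_sum]
  rw [map_sum]
  refine le_trans (MvPolynomial.totalDegree_finset_sum _ _) (Finset.sup_le fun d hd => ?_)
  rw [MvPolynomial.bind₁_monomial]
  refine le_trans (MvPolynomial.totalDegree_mul _ _) ?_
  rw [MvPolynomial.totalDegree_C, zero_add]
  refine le_trans (MvPolynomial.totalDegree_finset_prod _ _) ?_
  refine le_trans (Finset.sum_le_sum (fun i _ => le_trans (MvPolynomial.totalDegree_pow _ _)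
    (Nat.mul_le_mul_left (d i) (hL i)))) ?_
  simp only [Nat.mul_one]
  exact le_trans (le_of_eq rfl) (le_trans (MvPolynomial.le_totalDegree hd) hP)
end DegB

noncomputable section TraceAux

variable (k : ℕ)

abbrev E2 : Type := EuclideanSpace ℝ (Fin 2)

abbrev idx := Fin (k+1) × Fin (k+1)

def mono (p : idx k) : Fin 2 →₀ ℕ := Finsupp.equivFunOnFinite.symm ![(p.1 : ℕ), (p.2 : ℕ)]

lemma mono_apply_0 (p : idx k) : mono k p 0 = (p.1 : ℕ) := rfl
lemma mono_apply_1 (p : idx k) : mono k p 1 = (p.2 : ℕ) := rfl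

lemma mono_injective : Function.Injective (mono k) := by
  intro p q h
  have h0 : mono k p 0 = mono k q 0 := by rw [h]
  have h1 : mono k p 1 = mono k q 1 := by rw [h]
  rw [mono_apply_0, mono_apply_0] at h0
  rw [mono_apply_1, mono_apply_1] at h1
  exact Prod.ext (Fin.ext h0) (Fin.ext h1)

def fp (c : idx k → ℝ) (x : E2) : ℝ :=
  ∑ p : idx k, c p * x 0 ^ (p.1 : ℕ) * x 1 ^ (p.2 : ℕ)

lemma eval_eq_fp (Q : MvPolynomial (Fin 2) ℝ) (hQ : Q.totalDegree ≤ k) (x : E2) :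
    MvPolynomial.eval (fun t => x t) Q = fp k (fun p => Q.coeff (mono k p)) x := by
  classical
  set y : Fin 2 → ℝ := fun t => x t with hy
  set g : (Fin 2 →₀ ℕ) → ℝ := fun d => Q.coeff d * y 0 ^ (d 0) * y 1 ^ (d 1) with hg
  have base : MvPolynomial.eval y Q = ∑ d ∈ Q.support, g d := by
    rw [MvPolynomial.eval_eq']
    refine Finset.sum_congr rfl fun d _ => ?_
    rw [Fin.prod_univ_two, hg]; ring
  have hsub : Q.support ⊆ Finset.image (mono k) Finset.univ := by
    intro d hd
    have hdeg : ∀ i : Fin 2, d i ≤ k := by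
      intro i
      refine le_trans ?_ (le_trans (MvPolynomial.le_totalDegree hd) hQ)
      by_cases hdi : d i = 0
      · simp [hdi]
      · have hi : i ∈ d.support := Finsupp.mem_support_iff.2 hdi
        exact Finset.single_le_sum (f := fun a => d a) (fun _ _ => Nat.zero_le _) hi
    refine Finset.mem_image.2 ⟨(⟨d 0, Nat.lt_succ_of_le (hdeg 0)⟩, ⟨d 1, Nat.lt_succ_of_le (hdeg 1)⟩), Finset.mem_univ _, ?_⟩
    ext i
    fin_cases i
    · exact mono_apply_0 k _
    · exact mono_apply_1 k _
  calc MvPolynomial.eval y Q = ∑ d ∈ Q.support, g d := base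
    _ = ∑ d ∈ Finset.image (mono k) Finset.univ, g d :=
        (Finset.sum_subset hsub (fun d _ hd => by
          rw [hg]; simp [MvPolynomial.notMem_support_iff.1 hd]))
    _ = ∑ p : idx k, g (mono k p) :=
        (Finset.sum_image (fun p _ q _ h => mono_injective k h))
    _ = fp k (fun p => Q.coeff (mono k p)) x := by
        refine Finset.sum_congr rfl fun p _ => ?_
        show Q.coeff (mono k p) * y 0 ^ (mono k p 0) * y 1 ^ (mono k p 1) = _
        rw [mono_apply_0, mono_apply_1]




def pt (s t : ℝ) : E2 := (WithLp.equiv 2 (Fin 2 → ℝ)).symm ![s, t]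

@[simp] lemma pt_apply_0 (s t : ℝ) : pt s t 0 = s := rfl
@[simp] lemma pt_apply_1 (s t : ℝ) : pt s t 1 = t := rfl

def Tref : Set E2 := convexHull ℝ {pt 0 0, pt 1 0, pt 0 1}

def Uref : Set E2 := {x | 0 < x 0 ∧ 0 < x 1 ∧ x 0 + x 1 < 1}

lemma cont_coord (i : Fin 2) : Continuous (fun x : E2 => x i) :=
  (EuclideanSpace.proj i).continuous

lemma isOpen_Uref : IsOpen Uref := by
  have h0 : IsOpen {x : E2 | 0 < x 0} := isOpen_lt continuous_const (cont_coord 0)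
  have h1 : IsOpen {x : E2 | 0 < x 1} := isOpen_lt continuous_const (cont_coord 1)
  have h2 : IsOpen {x : E2 | x 0 + x 1 < 1} :=
    isOpen_lt ((cont_coord 0).add (cont_coord 1)) continuous_const
  exact (h0.inter (h1.inter h2) : _)

lemma Uref_nonempty : Uref.Nonempty := by
  refine ⟨pt (1/4) (1/4), ?_, ?_, ?_⟩ <;> norm_num

lemma ext_E2 (x y : E2) (h0 : x 0 = y 0) (h1 : x 1 = y 1) : x = y := by
  ext i
  fin_cases i <;> assumption

lemma Uref_subset_Tref : Uref ⊆ Tref := by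
  intro x hx
  obtain ⟨hx0, hx1, hxs⟩ := hx
  have := Convex.sum_mem (convex_convexHull ℝ ({pt 0 0, pt 1 0, pt 0 1} : Set E2))
    (t := (Finset.univ : Finset (Fin 3)))
    (w := ![1 - x 0 - x 1, x 0, x 1]) (z := ![pt 0 0, pt 1 0, pt 0 1])
    (by intro i _; fin_cases i <;> simp <;> linarith)
    (by simp [Fin.sum_univ_three]; ring)
    (by intro i _; fin_cases i <;>
      simp only [Matrix.cons_val_zero, Matrix.cons_val_one, Matrix.head_cons,
        Matrix.cons_val_two, Matrix.tail_cons] <;>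
      exact subset_convexHull ℝ _ (by simp))
  rw [Fin.sum_univ_three] at this
  rw [Tref]
  convert this using 1
  refine ext_E2 _ _ ?_ ?_ <;>
  · simp [pt]
    try norm_num

lemma Tref_compact : IsCompact Tref :=
  (Set.toFinite _).isCompact_convexHull ℝ

lemma Tref_measurable : MeasurableSet Tref := Tref_compact.measurableSet

lemma Tref_vol_pos : 0 < (volume Tref).toReal := by
  have h1 : 0 < volume Uref := isOpen_Uref.measure_pos volume Uref_nonempty
  have h2 : volume Uref ≤ volume Tref := measure_mono Uref_subset_Tref
  have h3 : volume Tref < ⊤ := Tref_compact.measure_lt_top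
  exact ENNReal.toReal_pos (lt_of_lt_of_le h1 h2).ne' h3.ne

lemma Tref_vol_ne_top : volume Tref ≠ ⊤ := Tref_compact.measure_lt_top.ne

lemma integrableOn_Tref {f : E2 → ℝ} (hf : Continuous f) : IntegrableOn f Tref volume :=
  hf.continuousOn.integrableOn_compact Tref_compact



lemma contMon (a b : ℕ) : Continuous fun x : E2 => x 0 ^ a * x 1 ^ b :=
  ((cont_coord 0).pow a).mul ((cont_coord 1).pow b)

lemma fp_continuous (c : idx k → ℝ) : Continuous (fp k c) := by
  refine continuous_finset_sum _ fun p _ => ?_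
  exact (continuous_const.mul ((cont_coord 0).pow _)).mul ((cont_coord 1).pow _)

def F (c : idx k → ℝ) : ℝ := ∫ x in Tref, (fp k c x)^2

lemma F_nonneg (c : idx k → ℝ) : 0 ≤ F k c :=
  setIntegral_nonneg Tref_measurable (fun _ _ => sq_nonneg _)

def Gm (p q : idx k) : ℝ :=
  ∫ x in Tref, (x 0 ^ ((p.1:ℕ)+(q.1:ℕ)) * x 1 ^ ((p.2:ℕ)+(q.2:ℕ)))

lemma F_formula (c : idx k → ℝ) :
    F k c = ∑ p : idx k, ∑ q : idx k, c p * c q * Gm k p q := by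
  have h1 : ∀ x : E2, (fp k c x)^2 = ∑ p : idx k, ∑ q : idx k,
      c p * c q * (x 0 ^ ((p.1:ℕ)+(q.1:ℕ)) * x 1 ^ ((p.2:ℕ)+(q.2:ℕ))) := by
    intro x
    rw [sq, fp, Finset.sum_mul_sum]
    exact Finset.sum_congr rfl fun p _ => Finset.sum_congr rfl fun q _ => by
      rw [pow_add, pow_add]; ring
  rw [F]
  simp_rw [h1]
  rw [integral_finset_sum _ (fun p _ => ?_)]
  · refine Finset.sum_congr rfl fun p _ => ?_
    rw [integral_finset_sum _ (fun q _ => ?_)]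
    · exact Finset.sum_congr rfl fun q _ => by
        rw [Gm]; exact integral_const_mul _ _
    · exact (integrableOn_Tref (continuous_const.mul (contMon _ _)))
  · refine (integrableOn_Tref ?_)
    exact continuous_finset_sum _ fun q _ => continuous_const.mul (contMon _ _)

lemma F_continuous : Continuous (F k) := by
  have hF : F k = fun c => ∑ p : idx k, ∑ q : idx k, c p * c q * Gm k p q :=
    funext (F_formula k)
  rw [hF]
  exact continuous_finset_sum _ fun p _ => continuous_finset_sum _ fun q _ =>
    ((continuous_apply p).mul (continuous_apply q)).mul continuous_const

lemma fp_smul (s : ℝ) (c : idx k → ℝ) (x : E2) :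
    fp k (s • c) x = s * fp k c x := by
  rw [fp, fp, Finset.mul_sum]
  exact Finset.sum_congr rfl fun p _ => by simp [mul_assoc]

lemma F_smul (s : ℝ) (c : idx k → ℝ) : F k (s • c) = s^2 * F k c := by
  rw [F, F]
  simp_rw [fp_smul, mul_pow]
  exact integral_const_mul _ _

lemma vanish_of_F_eq_zero (c : idx k → ℝ) (h : F k c = 0) :
    ∀ x ∈ Uref, fp k c x = 0 := by
  have hi : IntegrableOn (fun x => (fp k c x)^2) Tref volume :=
    integrableOn_Tref ((fp_continuous k c).pow 2)
  have hae : (fun x => (fp k c x)^2) =ᵐ[volume.restrict Tref] 0 :=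
    (integral_eq_zero_iff_of_nonneg (fun _ => sq_nonneg _) hi).1 h
  have hNopen : IsOpen {y : E2 | fp k c y ≠ 0} :=
    (isClosed_eq (fp_continuous k c) continuous_const).isOpen_compl
  have h0 : volume.restrict Tref {y : E2 | fp k c y ≠ 0} = 0 := by
    have := Filter.eventuallyEq_iff_exists_mem.1 hae
    have h' : volume.restrict Tref {y : E2 | (fp k c y)^2 ≠ 0} = 0 := by
      simpa [Filter.EventuallyEq, ae_iff] using hae
    convert h' using 2
    ext y
    simp [pow_eq_zero_iff]
  intro x hx
  by_contra hne
  have hVopen : IsOpen (Uref ∩ {y : E2 | fp k c y ≠ 0}) := isOpen_Uref.inter hNopen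
  have hpos : 0 < volume (Uref ∩ {y : E2 | fp k c y ≠ 0}) :=
    hVopen.measure_pos volume ⟨x, hx, hne⟩
  have hle : volume (Uref ∩ {y : E2 | fp k c y ≠ 0}) ≤
      volume.restrict Tref {y : E2 | fp k c y ≠ 0} := by
    rw [Measure.restrict_apply hNopen.measurableSet]
    refine measure_mono fun y hy => ⟨hy.2, Uref_subset_Tref hy.1⟩
  rw [h0] at hle
  exact absurd (le_antisymm hle zero_le) hpos.ne'

lemma coeffs_zero_of_vanish (c : idx k → ℝ)
    (h : ∀ s ∈ Ioo (1/4:ℝ) (1/3), ∀ t ∈ Ioo (1/4:ℝ) (1/3),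
      ∑ p : idx k, c p * s ^ (p.1:ℕ) * t ^ (p.2:ℕ) = 0) : c = 0 := by
  classical
  have coeff_of_sum : ∀ (γ : Fin (k+1) → ℝ) (a : Fin (k+1)),
      (∑ a' : Fin (k+1), Polynomial.monomial (a':ℕ) (γ a')).coeff (a:ℕ) = γ a := by
    intro γ a
    rw [Polynomial.finset_sum_coeff]
    rw [Finset.sum_eq_single a (fun a' _ hne => by
      rw [Polynomial.coeff_monomial, if_neg (fun hc => hne (Fin.ext hc))])
      (fun habs => absurd (Finset.mem_univ a) habs)]
    rw [Polynomial.coeff_monomial, if_pos rfl]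
  have step1 : ∀ t ∈ Ioo (1/4:ℝ) (1/3), ∀ a : Fin (k+1),
      ∑ b : Fin (k+1), c (a,b) * t ^ (b:ℕ) = 0 := by
    intro t ht a
    set q1 : Polynomial ℝ := ∑ a' : Fin (k+1),
      Polynomial.monomial (a':ℕ) (∑ b : Fin (k+1), c (a',b) * t^(b:ℕ)) with hq1def
    have hq1 : q1 = 0 := by
      refine Polynomial.eq_zero_of_infinite_isRoot _ ?_
      refine (Set.Ioo_infinite (by norm_num : (1/4:ℝ) < 1/3)).mono fun s hs => ?_
      show Polynomial.IsRoot q1 s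
      rw [Polynomial.IsRoot, hq1def, Polynomial.eval_finset_sum]
      simp_rw [Polynomial.eval_monomial]
      have := h s hs t ht
      rw [Fintype.sum_prod_type] at this
      rw [← this]
      refine Finset.sum_congr rfl fun a' _ => ?_
      rw [Finset.sum_mul]
      refine Finset.sum_congr rfl fun b _ => ?_
      ring
    have := coeff_of_sum (fun a' => ∑ b : Fin (k+1), c (a',b) * t^(b:ℕ)) a
    rw [← hq1def, hq1] at this
    simpa using this.symm
  have step2 : ∀ (a b : Fin (k+1)), c (a, b) = 0 := by
    intro a b
    set q2 : Polynomial ℝ := ∑ b' : Fin (k+1), Polynomial.monomial (b':ℕ) (c (a,b'))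
      with hq2def
    have hq2 : q2 = 0 := by
      refine Polynomial.eq_zero_of_infinite_isRoot _ ?_
      refine (Set.Ioo_infinite (by norm_num : (1/4:ℝ) < 1/3)).mono fun t ht => ?_
      show Polynomial.IsRoot q2 t
      rw [Polynomial.IsRoot, hq2def, Polynomial.eval_finset_sum]
      simp_rw [Polynomial.eval_monomial]
      exact step1 t ht a
    have := coeff_of_sum (fun b' => c (a,b')) b
    rw [← hq2def, hq2] at this
    simpa using this.symm
  funext p
  obtain ⟨a, b⟩ := p
  exact step2 a b

lemma c_zero_of_fp_vanish (c : idx k → ℝ) (h : ∀ x ∈ Uref, fp k c x = 0) : c = 0 := by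
  apply coeffs_zero_of_vanish
  intro s hs t ht
  have hpt : pt s t ∈ Uref := by
    refine ⟨?_, ?_, ?_⟩ <;> simp <;> [skip; skip; skip] <;> first | linarith [hs.1, hs.2, ht.1, ht.2]
  have := h (pt s t) hpt
  rw [fp] at this
  simpa using this

lemma ref_bound : ∃ ε : ℝ, 0 < ε ∧ ∀ c : idx k → ℝ,
    ε * (∑ p : idx k, |c p|)^2 ≤ F k c := by
  classical
  set Sph := {c : idx k → ℝ | ∑ p : idx k, |c p| = 1} with hSph
  have hn1cont : Continuous fun c : idx k → ℝ => ∑ p : idx k, |c p| :=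
    continuous_finset_sum _ fun p _ => (continuous_apply p).abs
  have hclosed : IsClosed Sph := isClosed_eq hn1cont continuous_const
  have hsub : Sph ⊆ Metric.closedBall 0 1 := by
    intro c hc
    rw [Metric.mem_closedBall, dist_zero_right]
    refine (pi_norm_le_iff_of_nonneg (by norm_num)).2 fun p => ?_
    rw [Real.norm_eq_abs]
    calc |c p| ≤ ∑ q : idx k, |c q| :=
          Finset.single_le_sum (f := fun q : idx k => |c q|)
            (fun q _ => abs_nonneg _) (Finset.mem_univ p)
      _ = 1 := hc
  have hcompact : IsCompact Sph :=
    (isCompact_closedBall (0 : idx k → ℝ) 1).of_isClosed_subset hclosed hsub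
  have hne : Sph.Nonempty := by
    refine ⟨fun p => if p = ((0 : Fin (k+1)), (0 : Fin (k+1))) then 1 else 0, ?_⟩
    simp [hSph, apply_ite abs, Finset.sum_ite_eq']
  obtain ⟨c₀, hc₀, hmin⟩ := hcompact.exists_isMinOn hne (F_continuous k).continuousOn
  have hεpos : 0 < F k c₀ := by
    rcases (F_nonneg k c₀).eq_or_lt with heq | hlt
    · exfalso
      have hz : c₀ = 0 := c_zero_of_fp_vanish k c₀ (vanish_of_F_eq_zero k c₀ heq.symm)
      rw [hz] at hc₀
      simp [hSph] at hc₀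
    · exact hlt
  refine ⟨F k c₀, hεpos, fun c => ?_⟩
  by_cases hc : c = 0
  · subst hc
    simp [F, fp]
  · set n := ∑ p : idx k, |c p| with hn
    have hnpos : 0 < n := by
      rcases (Finset.sum_nonneg (fun p _ => abs_nonneg (c p))).eq_or_lt with heq | hlt
      · exfalso
        refine hc (funext fun p => abs_eq_zero.1 ?_)
        have := (Finset.sum_eq_zero_iff_of_nonneg (fun q _ => abs_nonneg (c q))).1 heq.symm
        exact this p (Finset.mem_univ p)
      · exact hlt
    have hcS : (n⁻¹ • c) ∈ Sph := by
      show (∑ p : idx k, |(n⁻¹ • c) p|) = 1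
      have : ∀ p : idx k, |(n⁻¹ • c) p| = n⁻¹ * |c p| := fun p => by
        simp [abs_mul, abs_of_pos (inv_pos.2 hnpos)]
      simp_rw [this]
      rw [← Finset.mul_sum, ← hn, inv_mul_cancel₀ hnpos.ne']
    have h1 : F k c₀ ≤ F k (n⁻¹ • c) := hmin hcS
    have h2 : F k c = n^2 * F k (n⁻¹ • c) := by
      rw [← F_smul, smul_smul, mul_inv_cancel₀ hnpos.ne', one_smul]
    rw [h2, mul_comm (F k c₀) (n^2)]
    exact mul_le_mul_of_nonneg_left h1 (sq_nonneg n)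

lemma fp_edge_bound (c : idx k → ℝ) {t : ℝ} (ht : t ∈ Icc (0:ℝ) 1) :
    |fp k c (pt t 0)| ≤ ∑ p : idx k, |c p| := by
  rw [fp]
  refine le_trans (Finset.abs_sum_le_sum_abs _ _) ?_
  refine Finset.sum_le_sum fun p _ => ?_
  rw [abs_mul, abs_mul]
  simp only [pt_apply_0, pt_apply_1]
  have h1 : |t ^ (p.1:ℕ)| ≤ 1 := by
    rw [abs_pow]
    exact pow_le_one₀ (abs_nonneg t) (by rw [abs_of_nonneg ht.1]; exact ht.2)
  have h2 : |(0:ℝ) ^ (p.2:ℕ)| ≤ 1 := by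
    rcases Nat.eq_zero_or_pos (p.2:ℕ) with h|h
    · simp [h]
    · simp [zero_pow h.ne']
  calc |c p| * |t ^ (p.1:ℕ)| * |(0:ℝ) ^ (p.2:ℕ)| ≤ |c p| * 1 * 1 := by
        refine mul_le_mul (mul_le_mul_of_nonneg_left h1 (abs_nonneg _)) h2 (abs_nonneg _) ?_
        positivity
    _ = |c p| := by ring

lemma restrict_hausdorff_segment (a b : E2) :
    (μH[1] : Measure E2).restrict (segment ℝ a b) =
      Measure.map (AffineMap.lineMap a b : ℝ →ᵃ[ℝ] E2)
        ((nndist a b : ℝ≥0∞) • volume.restrict (Icc (0:ℝ) 1)) := by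
  have hcont : Continuous (AffineMap.lineMap a b : ℝ →ᵃ[ℝ] E2) := AffineMap.lineMap_continuous
  refine Measure.ext fun S hS => ?_
  rw [Measure.map_apply hcont.measurable hS, Measure.smul_apply, Measure.restrict_apply hS,
    Measure.restrict_apply (hcont.measurable hS)]
  have himage : S ∩ segment ℝ a b =
      (AffineMap.lineMap a b : ℝ →ᵃ[ℝ] E2) ''
        ((AffineMap.lineMap a b : ℝ →ᵃ[ℝ] E2) ⁻¹' S ∩ Icc 0 1) := by
    rw [Set.inter_comm _ (Icc 0 1), Set.image_inter_preimage, ← segment_eq_image_lineMap,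
      Set.inter_comm]
  rw [himage, MeasureTheory.hausdorffMeasure_lineMap_image a b _, hausdorffMeasure_real]
  simp [ENNReal.smul_def]

lemma edge_integral (a b : E2) (f : E2 → ℝ) (hf : Continuous f) :
    ∫ x in segment ℝ a b, f x ∂μH[1] =
      (dist a b) * ∫ t in Icc (0:ℝ) 1, f ((AffineMap.lineMap a b : ℝ →ᵃ[ℝ] E2) t) := by
  have hcont : Continuous (AffineMap.lineMap a b : ℝ →ᵃ[ℝ] E2) := AffineMap.lineMap_continuous
  rw [show (∫ x in segment ℝ a b, f x ∂μH[1]) =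
      ∫ x, f x ∂((μH[1] : Measure E2).restrict (segment ℝ a b)) from rfl,
    restrict_hausdorff_segment a b,
    integral_map hcont.aemeasurable hf.aestronglyMeasurable, integral_smul_measure]
  rw [smul_eq_mul, ENNReal.coe_toReal, coe_nndist]

end TraceAux

open MeasureTheory Set

/-- L¹-on-the-edge form of the trace-inverse estimate: for every polynomial degree `k`
there is a constant `κ > 0`, depending only on `k`, such that for every nondegenerate
triangle `T ⊂ ℝ²`, every edge `e` of `T` and every polynomial `φ` of total degree at
most `k`, `∫_e |φ| dH¹ ≤ κ (|e|/|T|^{1/2}) ‖φ‖_{L²(T)}`. -/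
theorem stmt_1 (k : ℕ) :
    ∃ κ : ℝ, 0 < κ ∧
      ∀ v : Fin 3 → EuclideanSpace ℝ (Fin 2), AffineIndependent ℝ v →
      ∀ i j : Fin 3, i ≠ j →
      ∀ P : MvPolynomial (Fin 2) ℝ, P.totalDegree ≤ k →
        (∫ x in segment ℝ (v i) (v j),
            |MvPolynomial.eval (fun t => x t) P| ∂μH[1]) ≤
          κ * (dist (v i) (v j) /
              Real.sqrt ((volume (convexHull ℝ (Set.range v))).toReal)) *
            Real.sqrt (∫ x in convexHull ℝ (Set.range v),
              (MvPolynomial.eval (fun t => x t) P) ^ 2) := by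
  classical
  obtain ⟨ε, hεpos, href⟩ := ref_bound k
  have hfin : ∀ i j : Fin 3, i ≠ j →
      (-(i+j) ≠ i ∧ -(i+j) ≠ j ∧ ∀ l, l = i ∨ l = j ∨ l = -(i+j)) := by decide
  set v0 : ℝ := (volume Tref).toReal with hv0def
  have hv0pos : 0 < v0 := Tref_vol_pos
  refine ⟨Real.sqrt v0 / Real.sqrt ε, by positivity, ?_⟩
  intro v hv i j hij P hP
  obtain ⟨hmi, hmj, hcover⟩ := hfin i j hij
  set m : Fin 3 := -(i+j) with hmdef
  set w₁ : E2 := v j - v i with hw₁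
  set w₂ : E2 := v m - v i with hw₂
  set M : E2 →L[ℝ] E2 :=
    (EuclideanSpace.proj (0 : Fin 2)).smulRight w₁ +
    (EuclideanSpace.proj (1 : Fin 2)).smulRight w₂ with hMdef
  have hM_apply : ∀ x : E2, M x = x 0 • w₁ + x 1 • w₂ := by
    intro x
    rw [hMdef]
    simp [ContinuousLinearMap.smulRight_apply]
  -- linear independence of w₁, w₂
  have hli : ∀ a b : ℝ, a • w₁ + b • w₂ = 0 → a = 0 ∧ b = 0 := by
    intro a b hab
    have hli' := (affineIndependent_iff_linearIndependent_vsub ℝ v i).1 hv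
    set g : {x : Fin 3 // x ≠ i} → ℝ := fun l => if (l : Fin 3) = j then a else b with hg
    have huniv : (Finset.univ : Finset {x : Fin 3 // x ≠ i}) =
        {⟨j, hij.symm⟩, ⟨m, hmi⟩} := by
      ext l
      simp only [Finset.mem_univ, Finset.mem_insert, Finset.mem_singleton, true_iff]
      rcases hcover l.1 with h | h | h
      · exact absurd h l.2
      · exact Or.inl (Subtype.ext h)
      · exact Or.inr (Subtype.ext h)
    have hjm : (⟨j, hij.symm⟩ : {x : Fin 3 // x ≠ i}) ≠ ⟨m, hmi⟩ := by
      intro hc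
      exact hmj (congrArg Subtype.val hc).symm
    have hsum : ∑ l : {x : Fin 3 // x ≠ i}, g l • (v l -ᵥ v i) = 0 := by
      rw [huniv, Finset.sum_insert (by simpa using hjm), Finset.sum_singleton]
      have e1 : g ⟨j, hij.symm⟩ = a := if_pos rfl
      have e2 : g ⟨m, hmi⟩ = b := if_neg hmj
      rw [e1, e2]
      simpa [vsub_eq_sub, hw₁, hw₂] using hab
    have hz := Fintype.linearIndependent_iff.1 hli' g hsum
    constructor
    · have h3 := hz ⟨j, hij.symm⟩
      rw [hg] at h3
      simpa using h3
    · have h3 := hz ⟨m, hmi⟩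
      rw [hg] at h3
      simpa [hmj] using h3
  have hMinj : Function.Injective M := by
    intro x y hxy
    rw [hM_apply, hM_apply] at hxy
    have h1 : (x 0 - y 0) • w₁ + (x 1 - y 1) • w₂ = 0 := by
      have : (x 0 - y 0) • w₁ + (x 1 - y 1) • w₂ =
          (x 0 • w₁ + x 1 • w₂) - (y 0 • w₁ + y 1 • w₂) := by
        rw [sub_smul, sub_smul]; abel
      rw [this, hxy, sub_self]
    obtain ⟨h0, h1'⟩ := hli _ _ h1
    exact ext_E2 x y (by linarith) (by linarith)
  -- determinant nonzero
  have hdet : M.det ≠ 0 := by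
    intro hc
    have hker := LinearMap.bot_lt_ker_of_det_eq_zero (by simpa using hc)
    obtain ⟨x, hxmem, hx0⟩ := (Submodule.ne_bot_iff _).1 hker.ne'
    exact hx0 (hMinj (by simpa using (LinearMap.mem_ker.1 hxmem)))
  have hDpos : 0 < |M.det| := abs_pos.2 hdet
  -- the affine map
  set Aaff : E2 →ᵃ[ℝ] E2 :=
    { toFun := fun x => v i + M x
      linear := (M : E2 →ₗ[ℝ] E2)
      map_vadd' := by
        intro p w
        simp only [vadd_eq_add, ContinuousLinearMap.coe_coe, map_add]
        abel } with hAdef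
  have hA_apply : ∀ x : E2, Aaff x = v i + M x := fun _ => rfl
  -- images of the reference vertices
  have hA0 : Aaff (pt 0 0) = v i := by
    rw [hA_apply, hM_apply]
    simp
  have hA1 : Aaff (pt 1 0) = v j := by
    rw [hA_apply, hM_apply]
    simp [hw₁]
  have hA2 : Aaff (pt 0 1) = v m := by
    rw [hA_apply, hM_apply]
    simp [hw₂]
  -- image of the reference triangle
  have himg : Aaff '' Tref = convexHull ℝ (Set.range v) := by
    rw [Tref, AffineMap.image_convexHull]
    congr 1
    rw [Set.image_insert_eq, Set.image_insert_eq, Set.image_singleton, hA0, hA1, hA2]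
    ext y
    simp only [Set.mem_insert_iff, Set.mem_singleton_iff, Set.mem_range]
    constructor
    · rintro (rfl | rfl | rfl)
      exacts [⟨i, rfl⟩, ⟨j, rfl⟩, ⟨m, rfl⟩]
    · rintro ⟨l, rfl⟩
      rcases hcover l with rfl | rfl | rfl
      exacts [Or.inl rfl, Or.inr (Or.inl rfl), Or.inr (Or.inr rfl)]
  -- polynomial composed with the affine map
  set L : Fin 2 → MvPolynomial (Fin 2) ℝ := fun r =>
    MvPolynomial.C (v i r) + MvPolynomial.C (w₁ r) * MvPolynomial.X 0 +
      MvPolynomial.C (w₂ r) * MvPolynomial.X 1 with hLdef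
  have hLdeg : ∀ r, (L r).totalDegree ≤ 1 := by
    intro r
    rw [hLdef]
    refine le_trans (MvPolynomial.totalDegree_add _ _) (max_le ?_ ?_)
    · refine le_trans (MvPolynomial.totalDegree_add _ _) (max_le ?_ ?_)
      · simp [MvPolynomial.totalDegree_C]
      · refine le_trans (MvPolynomial.totalDegree_mul _ _) ?_
        simp [MvPolynomial.totalDegree_C, MvPolynomial.totalDegree_X]
    · refine le_trans (MvPolynomial.totalDegree_mul _ _) ?_
      simp [MvPolynomial.totalDegree_C, MvPolynomial.totalDegree_X]
  set Q : MvPolynomial (Fin 2) ℝ := MvPolynomial.bind₁ L P with hQdef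
  have hQdeg : Q.totalDegree ≤ k := totalDegree_bind₁_le k L hLdeg P hP
  set c : idx k → ℝ := fun p => Q.coeff (mono k p) with hcdef
  -- evaluation identity
  have heval : ∀ x : E2, MvPolynomial.eval (fun t => (Aaff x) t) P = fp k c x := by
    intro x
    have h2' : MvPolynomial.eval (fun t => x t) Q =
        MvPolynomial.eval (fun r => MvPolynomial.eval (fun t => x t) (L r)) P := by
      rw [hQdef]
      exact MvPolynomial.eval₂Hom_bind₁ _ _ _ _
    have hfun : (fun r => MvPolynomial.eval (fun t => x t) (L r)) =
        fun t => (Aaff x) t := by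
      funext r
      show MvPolynomial.eval (fun t => x t) (L r) = (Aaff x) r
      rw [hLdef, hA_apply, hM_apply]
      simp only [map_add, map_mul, MvPolynomial.eval_C, MvPolynomial.eval_X]
      rw [PiLp.add_apply, PiLp.add_apply, PiLp.smul_apply, PiLp.smul_apply]
      simp [smul_eq_mul]
      ring
    have h2 : MvPolynomial.eval (fun t => x t) Q =
        MvPolynomial.eval (fun t => (Aaff x) t) P := by
      rw [h2', hfun]
    rw [← h2]
    exact eval_eq_fp k Q hQdeg x
  -- change of variables for area integrals
  have hcv : ∀ g : E2 → ℝ,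
      ∫ x in convexHull ℝ (Set.range v), g x =
        ∫ x in Tref, |M.det| * g (Aaff x) := by
    intro g
    rw [← himg]
    have hfd : ∀ x ∈ Tref, HasFDerivWithinAt (⇑Aaff) M Tref x := by
      intro x _
      have : HasFDerivAt (fun y : E2 => v i + M y) M x := (M.hasFDerivAt).const_add (v i)
      exact this.hasFDerivWithinAt
    have hinj : Set.InjOn (⇑Aaff) Tref := fun x _ y _ hxy =>
      hMinj (by
        have := hxy
        rw [hA_apply, hA_apply] at this
        exact add_left_cancel this)
    have := integral_image_eq_integral_abs_det_fderiv_smul volume Tref_measurable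
      (f' := fun _ => M) hfd hinj g
    rw [this]
    simp [smul_eq_mul]
  -- area relation
  have harea : (volume (convexHull ℝ (Set.range v))).toReal = |M.det| * v0 := by
    have h1 := hcv (fun _ => (1:ℝ))
    rw [setIntegral_const, setIntegral_const] at h1
    simpa [hv0def, mul_comm, Measure.real] using h1
  have hIT : (∫ x in convexHull ℝ (Set.range v), (MvPolynomial.eval (fun t => x t) P) ^ 2) =
      |M.det| * F k c := by
    have h1 := hcv (fun x => (MvPolynomial.eval (fun t => x t) P) ^ 2)
    rw [h1, F]
    rw [← integral_const_mul]
    refine setIntegral_congr_fun Tref_measurable fun x _ => ?_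
    rw [heval x]
  -- edge integral
  have hfpcont : Continuous (fun x : E2 => |MvPolynomial.eval (fun t => x t) P|) := by
    have : (fun x : E2 => MvPolynomial.eval (fun t => x t) P) =
        fp k (fun p => P.coeff (mono k p)) := funext (eval_eq_fp k P hP)
    rw [show (fun x : E2 => |MvPolynomial.eval (fun t => x t) P|) =
        fun x => |fp k (fun p => P.coeff (mono k p)) x| from funext (fun x => by rw [← this])]
    exact (fp_continuous k _).abs
  have hedge := edge_integral (v i) (v j)
    (fun x => |MvPolynomial.eval (fun t => x t) P|) hfpcont
  have hlineAfun : ∀ t : ℝ, (AffineMap.lineMap (v i) (v j) : ℝ →ᵃ[ℝ] E2) t = Aaff (pt t 0) := by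
    intro t
    rw [hA_apply, hM_apply]
    simp only [pt_apply_0, pt_apply_1, zero_smul, add_zero]
    rw [AffineMap.lineMap_apply]
    rw [hw₁]
    simp [vsub_eq_sub, vadd_eq_add]
    abel
  -- bound the edge integral
  set S : ℝ := ∑ p : idx k, |c p| with hSdef
  have hSnn : 0 ≤ S := Finset.sum_nonneg fun p _ => abs_nonneg _
  have hptcont : Continuous fun t : ℝ => pt t 0 := by
    have : (fun t : ℝ => pt t 0) = fun t : ℝ => t • pt 1 0 := by
      funext t
      refine ext_E2 _ _ ?_ ?_ <;> simp
    rw [this]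
    exact continuous_id.smul continuous_const
  have hedge2 : (∫ t in Icc (0:ℝ) 1, |MvPolynomial.eval
      (fun s => ((AffineMap.lineMap (v i) (v j) : ℝ →ᵃ[ℝ] E2) t) s) P|) ≤ S := by
    have hmono : ∀ t ∈ Icc (0:ℝ) 1, |MvPolynomial.eval
        (fun s => ((AffineMap.lineMap (v i) (v j) : ℝ →ᵃ[ℝ] E2) t) s) P| ≤ S := by
      intro t ht
      rw [hlineAfun t, heval (pt t 0)]
      exact fp_edge_bound k c ht
    have hint : IntegrableOn (fun t : ℝ => |MvPolynomial.eval
        (fun s => ((AffineMap.lineMap (v i) (v j) : ℝ →ᵃ[ℝ] E2) t) s) P|) (Icc 0 1) volume := by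
      exact (hfpcont.comp AffineMap.lineMap_continuous).continuousOn.integrableOn_compact
        isCompact_Icc
    calc (∫ t in Icc (0:ℝ) 1, |MvPolynomial.eval
          (fun s => ((AffineMap.lineMap (v i) (v j) : ℝ →ᵃ[ℝ] E2) t) s) P|)
        ≤ ∫ _t in Icc (0:ℝ) 1, S := by
          refine setIntegral_mono_on hint (integrableOn_const ?_) measurableSet_Icc hmono
          rw [Real.volume_Icc]; norm_num
      _ = S := by
          rw [setIntegral_const, Measure.real, Real.volume_Icc]
          norm_num
  -- the reference bound
  have hFS : ε * S ^ 2 ≤ F k c := href c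
  have hFnn : 0 ≤ F k c := F_nonneg k c
  have hSb : S ≤ Real.sqrt (F k c) / Real.sqrt ε := by
    have h1 : S ^ 2 ≤ F k c / ε := (le_div_iff₀ hεpos).2 (by linarith)
    calc S = Real.sqrt (S ^ 2) := (Real.sqrt_sq hSnn).symm
      _ ≤ Real.sqrt (F k c / ε) := Real.sqrt_le_sqrt h1
      _ = Real.sqrt (F k c) / Real.sqrt ε := Real.sqrt_div hFnn ε
  -- distance positivity
  have hd : 0 < dist (v i) (v j) := dist_pos.2 fun hc => hij (hv.injective hc)
  -- final computation
  have hRHS : Real.sqrt v0 / Real.sqrt ε *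
      (dist (v i) (v j) / Real.sqrt ((volume (convexHull ℝ (Set.range v))).toReal)) *
      Real.sqrt (∫ x in convexHull ℝ (Set.range v),
        (MvPolynomial.eval (fun t => x t) P) ^ 2) =
      dist (v i) (v j) * (Real.sqrt (F k c) / Real.sqrt ε) := by
    rw [hIT, harea, Real.sqrt_mul (abs_nonneg _), Real.sqrt_mul (abs_nonneg _)]
    have hsD : 0 < Real.sqrt |M.det| := Real.sqrt_pos.2 hDpos
    have hsv0 : 0 < Real.sqrt v0 := Real.sqrt_pos.2 hv0pos
    have hsε : 0 < Real.sqrt ε := Real.sqrt_pos.2 hεpos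
    field_simp
  rw [hRHS, hedge]
  calc dist (v i) (v j) * (∫ t in Icc (0:ℝ) 1, |MvPolynomial.eval
        (fun s => ((AffineMap.lineMap (v i) (v j) : ℝ →ᵃ[ℝ] E2) t) s) P|)
      ≤ dist (v i) (v j) * S := mul_le_mul_of_nonneg_left hedge2 hd.le
    _ ≤ dist (v i) (v j) * (Real.sqrt (F k c) / Real.sqrt ε) :=
        mul_le_mul_of_nonneg_left hSb hd.le
end

section
/- For every natural number k there exists a constant C > 0, depending only on k, with the following property: for all real numbers a < b and every continuous function u : [a,b] → ℝ, if p is the L²([a,b])-orthogonal projection of u onto the space of polynomials of degree at most k — i.e. p is a polynomial of degree at most k satisfying ∫_a^b (u(x) − p(x)) q(x) dx = 0 for every polynomial q of degree at most k — then sup_{x ∈ [a,b]} |p(x)| ≤ C · sup_{x ∈ [a,b]} |u(x)|. -/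
open MeasureTheory Polynomial

noncomputable section StmtAux


/-- `g` evaluates the polynomial with coefficients `c` at `t`. -/
def gA (k : ℕ) (c : Fin (k+1) → ℝ) (t : ℝ) : ℝ := ∑ i : Fin (k+1), c i * t ^ (i : ℕ)

def FA (k : ℕ) (c : Fin (k+1) → ℝ) : ℝ := ∫ t in (0:ℝ)..1, (gA k c t)^2

lemma gA_cont (k : ℕ) (c : Fin (k+1) → ℝ) : Continuous (gA k c) := by
  unfold gA; fun_prop

lemma gA_smul (k : ℕ) (r : ℝ) (c : Fin (k+1) → ℝ) (t : ℝ) :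
    gA k (r • c) t = r * gA k c t := by
  simp [gA, Finset.mul_sum, mul_assoc]

lemma FA_smul (k : ℕ) (r : ℝ) (c : Fin (k+1) → ℝ) : FA k (r • c) = r^2 * FA k c := by
  simp only [FA, gA_smul, mul_pow]
  rw [← intervalIntegral.integral_const_mul]

lemma FA_eq (k : ℕ) (c : Fin (k+1) → ℝ) :
    FA k c = ∑ i : Fin (k+1), ∑ j : Fin (k+1), c i * c j * (1 / ((i:ℝ)+(j:ℝ)+1)) := by
  unfold FA gA
  have h : ∀ t : ℝ, (∑ i : Fin (k+1), c i * t ^ (i:ℕ))^2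
      = ∑ i : Fin (k+1), ∑ j : Fin (k+1), (c i * c j) * t ^ ((i:ℕ)+(j:ℕ)) := by
    intro t
    rw [sq, Finset.sum_mul_sum]
    refine Finset.sum_congr rfl fun i _ => Finset.sum_congr rfl fun j _ => ?_
    rw [pow_add]; ring
  simp_rw [h]
  rw [intervalIntegral.integral_finset_sum]
  · refine Finset.sum_congr rfl fun i _ => ?_
    rw [intervalIntegral.integral_finset_sum]
    · refine Finset.sum_congr rfl fun j _ => ?_
      rw [intervalIntegral.integral_const_mul, integral_pow]
      push_cast
      ring
    · intro j _
      exact (Continuous.intervalIntegrable (by fun_prop) _ _)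
  · intro i _
    exact (Continuous.intervalIntegrable (by fun_prop) _ _)

lemma FA_cont (k : ℕ) : Continuous (FA k) := by
  have h : FA k = fun c => ∑ i : Fin (k+1), ∑ j : Fin (k+1), c i * c j * (1 / ((i:ℝ)+(j:ℝ)+1)) :=
    funext (FA_eq k)
  rw [h]
  exact continuous_finset_sum _ fun i _ => continuous_finset_sum _ fun j _ =>
    ((continuous_apply i).mul (continuous_apply j)).mul continuous_const

lemma FA_pos (k : ℕ) {c : Fin (k+1) → ℝ} (hc : c ≠ 0) : 0 < FA k c := by
  set P : Polynomial ℝ := ∑ i : Fin (k+1), Polynomial.C (c i) * Polynomial.X ^ (i:ℕ) with hPdef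
  have hPeval : ∀ t, P.eval t = gA k c t := by
    intro t; simp [hPdef, gA, Polynomial.eval_finset_sum]
  have hcoeff : ∀ i : Fin (k+1), P.coeff i = c i := by
    intro i
    rw [hPdef, Polynomial.finset_sum_coeff]
    rw [Finset.sum_eq_single i]
    · simp
    · intro j _ hj
      simp only [Polynomial.coeff_C_mul, Polynomial.coeff_X_pow]
      rw [if_neg (by simpa [Fin.val_eq_val] using Ne.symm hj), mul_zero]
    · simp
  have hP : P ≠ 0 := by
    intro h
    apply hc; funext i
    have := hcoeff i
    rw [h] at this
    simpa using this.symm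
  have hex : ∃ t0 ∈ Set.Icc (0:ℝ) 1, P.eval t0 ≠ 0 := by
    by_contra h
    push_neg at h
    refine hP (P.eq_zero_of_infinite_isRoot ?_)
    exact (Set.infinite_coe_iff.mp (Set.Icc.infinite zero_lt_one)).mono h
  obtain ⟨t0, ht0, hne⟩ := hex
  refine intervalIntegral.integral_pos zero_lt_one (((gA_cont k c).pow 2).continuousOn)
    (fun x _ => sq_nonneg _) ⟨t0, ht0, ?_⟩
  rw [← hPeval]
  positivity

lemma FA_min (k : ℕ) : ∃ m > 0, ∀ c : Fin (k+1) → ℝ, m * ‖c‖^2 ≤ FA k c := by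
  have hsc : IsCompact (Metric.sphere (0 : Fin (k+1) → ℝ) 1) := isCompact_sphere 0 1
  have hsne : (Metric.sphere (0 : Fin (k+1) → ℝ) 1).Nonempty :=
    NormedSpace.sphere_nonempty.mpr zero_le_one
  obtain ⟨c0, hc0, hmin⟩ := hsc.exists_isMinOn hsne (FA_cont k).continuousOn
  have hc0ne : c0 ≠ 0 := by
    intro h
    rw [h] at hc0
    simp at hc0
  refine ⟨FA k c0, FA_pos k hc0ne, ?_⟩
  intro c
  by_cases hc : c = 0
  · have : gA k (0 : Fin (k+1) → ℝ) = fun _ => 0 := by funext t; simp [gA]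
    simp [hc, FA, this]
  · have hn : (0:ℝ) < ‖c‖ := norm_pos_iff.mpr hc
    have h1 : (‖c‖⁻¹ • c) ∈ Metric.sphere (0 : Fin (k+1) → ℝ) 1 := by
      simp [norm_smul, abs_of_pos (inv_pos.mpr hn), inv_mul_cancel₀ hn.ne']
    have h2 : FA k c0 ≤ FA k (‖c‖⁻¹ • c) := hmin h1
    rw [FA_smul] at h2
    have := mul_le_mul_of_nonneg_right h2 (le_of_lt (by positivity : (0:ℝ) < ‖c‖^2))
    calc FA k c0 * ‖c‖^2 ≤ ‖c‖⁻¹^2 * FA k c * ‖c‖^2 := this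
      _ = FA k c := by field_simp

lemma gA_bound (k : ℕ) (c : Fin (k+1) → ℝ) {t : ℝ} (ht : t ∈ Set.Icc (0:ℝ) 1) :
    |gA k c t| ≤ ((k:ℝ)+1) * ‖c‖ := by
  calc |gA k c t| ≤ ∑ i : Fin (k+1), |c i * t^(i:ℕ)| := Finset.abs_sum_le_sum_abs _ _
    _ ≤ ∑ _i : Fin (k+1), ‖c‖ := by
        refine Finset.sum_le_sum fun i _ => ?_
        rw [abs_mul]
        have h1 : |c i| ≤ ‖c‖ := by
          simpa [Real.norm_eq_abs] using norm_le_pi_norm c i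
        have h2 : |t^(i:ℕ)| ≤ 1 := by
          rw [abs_pow]
          exact pow_le_one₀ (abs_nonneg t) (abs_le.mpr ⟨by linarith [ht.1], ht.2⟩)
        nlinarith [abs_nonneg (c i), norm_nonneg c]
    _ = ((k:ℝ)+1) * ‖c‖ := by
        rw [Finset.sum_const, Finset.card_univ, Fintype.card_fin, nsmul_eq_mul]
        push_cast; ring

lemma real_biSup_le {s : Set ℝ} {f : ℝ → ℝ} {B : ℝ} (hB : 0 ≤ B) (h : ∀ x ∈ s, f x ≤ B) :
    (⨆ x ∈ s, f x) ≤ B :=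
  Real.iSup_le (fun x => Real.iSup_le (h x) hB) hB

lemma le_real_biSup {s : Set ℝ} {f : ℝ → ℝ} (hb : BddAbove (f '' s)) {x : ℝ} (hx : x ∈ s) :
    f x ≤ ⨆ y ∈ s, f y := by
  obtain ⟨B, hB⟩ := hb
  have hrange : BddAbove (Set.range fun y => ⨆ _ : y ∈ s, f y) := by
    refine ⟨max B 0, ?_⟩
    rintro _ ⟨y, rfl⟩
    by_cases hy : y ∈ s
    · show (⨆ _ : y ∈ s, f y) ≤ max B 0
      rw [ciSup_pos (f := fun _ : y ∈ s => f y) hy]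
      exact le_max_of_le_left (hB ⟨y, hy, rfl⟩)
    · show (⨆ _ : y ∈ s, f y) ≤ max B 0
      exact Real.iSup_le (fun h => absurd h hy) (le_max_right B 0)
  calc f x = ⨆ _ : x ∈ s, f x := (ciSup_pos (f := fun _ : x ∈ s => f x) hx).symm
    _ ≤ ⨆ y ∈ s, f y := le_ciSup hrange x

end StmtAux

/-- `L^∞`-stability of the `L²([a,b])`-orthogonal projection onto polynomials of degree
at most `k`, with a constant depending only on `k` (not on the interval). -/
theorem stmt_2 (k : ℕ) :
    ∃ C : ℝ, 0 < C ∧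
      ∀ a b : ℝ, a < b →
      ∀ u : ℝ → ℝ, ContinuousOn u (Set.Icc a b) →
      ∀ p : Polynomial ℝ, p.degree ≤ (k : WithBot ℕ) →
        (∀ q : Polynomial ℝ, q.degree ≤ (k : WithBot ℕ) →
          ∫ x in a..b, (u x - p.eval x) * q.eval x = 0) →
        (⨆ x ∈ Set.Icc a b, |p.eval x|) ≤ C * ⨆ x ∈ Set.Icc a b, |u x| := by
  obtain ⟨m, hm, hFA⟩ := FA_min k
  refine ⟨((k:ℝ)+1)^2 / m, by positivity, ?_⟩
  intro a b hab u hu p hdeg horth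
  have hba : (0:ℝ) < b - a := by linarith
  set r : Polynomial ℝ := Polynomial.C a + Polynomial.C (b-a) * Polynomial.X with hr
  set q : Polynomial ℝ := p.comp r with hqdef
  have hqeval : ∀ t : ℝ, q.eval t = p.eval (a + (b-a)*t) := by
    intro t; simp [hqdef, hr, Polynomial.eval_comp]
  have hpdeg : p.natDegree ≤ k := Polynomial.natDegree_le_iff_degree_le.mpr hdeg
  have hrdeg : r.natDegree ≤ 1 := by
    rw [hr]
    refine le_trans (Polynomial.natDegree_add_le _ _) ?_
    simp only [Polynomial.natDegree_C, max_le_iff]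
    refine ⟨Nat.zero_le _, le_trans (Polynomial.natDegree_mul_le) ?_⟩
    simp [Polynomial.natDegree_C, Polynomial.natDegree_X]
  have hqdeg : q.natDegree ≤ k := by
    calc q.natDegree ≤ p.natDegree * r.natDegree := Polynomial.natDegree_comp_le
      _ ≤ k * 1 := Nat.mul_le_mul hpdeg hrdeg
      _ = k := mul_one k
  set c : Fin (k+1) → ℝ := fun i => q.coeff i with hcdef
  have hgc : ∀ t, gA k c t = q.eval t := by
    intro t
    rw [Polynomial.eval_eq_sum_range' (Nat.lt_succ_of_le hqdeg)]
    simp only [gA, hcdef]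
    exact Fin.sum_univ_eq_sum_range (fun i => q.coeff i * t ^ i) (k+1)
  have hint : ∀ t:ℝ, (gA k c t)^2 = (fun x => (p.eval x)^2) ((b-a) * t + a) := by
    intro t
    rw [hgc t, hqeval t]
    congr 2
    ring
  have hcov : (∫ x in a..b, (p.eval x)^2) = (b-a) * FA k c := by
    have h2 : FA k c = (b-a)⁻¹ * ∫ x in a..b, (p.eval x)^2 := by
      rw [FA]
      simp_rw [hint]
      rw [intervalIntegral.integral_comp_mul_add (fun x => (p.eval x)^2) hba.ne' a]
      have e1 : (b-a)*0 + a = a := by ring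
      have e2 : (b-a)*1 + a = b := by ring
      rw [e1, e2, smul_eq_mul]
    rw [h2]
    field_simp
  have hpcont : Continuous (fun x => p.eval x) := p.continuous
  have huIcc : Set.uIcc a b = Set.Icc a b := Set.uIcc_of_le hab.le
  have hiu : IntervalIntegrable (fun x => u x * p.eval x) volume a b :=
    ContinuousOn.intervalIntegrable (by rw [huIcc]; exact hu.mul hpcont.continuousOn)
  have hip2 : IntervalIntegrable (fun x => (p.eval x)^2) volume a b :=
    (hpcont.pow 2).intervalIntegrable a b
  have horth' := horth p hdeg
  have hsplit : (∫ x in a..b, (u x - p.eval x) * p.eval x)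
      = (∫ x in a..b, u x * p.eval x) - ∫ x in a..b, (p.eval x)^2 := by
    rw [← intervalIntegral.integral_sub hiu hip2]
    congr 1
    funext x
    ring
  have hup : (∫ x in a..b, u x * p.eval x) = (b-a) * FA k c := by
    rw [hsplit] at horth'
    linarith [hcov]
  set U : ℝ := ⨆ x ∈ Set.Icc a b, |u x| with hUdef
  have hbdd : BddAbove ((fun x => |u x|) '' Set.Icc a b) :=
    (isCompact_Icc.image_of_continuousOn hu.abs).bddAbove
  have hUx : ∀ x ∈ Set.Icc a b, |u x| ≤ U := fun x hx => le_real_biSup hbdd hx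
  have hU0 : 0 ≤ U := le_trans (abs_nonneg (u a)) (hUx a ⟨le_refl a, hab.le⟩)
  have hpb : ∀ x ∈ Set.Icc a b, |p.eval x| ≤ ((k:ℝ)+1) * ‖c‖ := by
    intro x hx
    have ht : (x - a)/(b - a) ∈ Set.Icc (0:ℝ) 1 :=
      ⟨div_nonneg (by linarith [hx.1]) hba.le, (div_le_one hba).mpr (by linarith [hx.2])⟩
    have h := gA_bound k c ht
    rw [hgc, hqeval] at h
    have hxx : a + (b-a)*((x-a)/(b-a)) = x := by field_simp; ring
    rwa [hxx] at h
  have hbound : |∫ x in a..b, u x * p.eval x| ≤ (U * (((k:ℝ)+1) * ‖c‖)) * |b - a| := by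
    rw [← Real.norm_eq_abs]
    apply intervalIntegral.norm_integral_le_of_norm_le_const
    intro x hx
    have hx' : x ∈ Set.Icc a b := by
      rw [Set.uIoc_of_le hab.le] at hx
      exact Set.Ioc_subset_Icc_self hx
    rw [Real.norm_eq_abs, abs_mul]
    exact mul_le_mul (hUx x hx') (hpb x hx') (abs_nonneg _) hU0
  have hKc : m * ‖c‖^2 ≤ U * (((k:ℝ)+1) * ‖c‖) := by
    have h1 : (b-a) * (m * ‖c‖^2) ≤ (b-a) * FA k c := by
      have := hFA c
      nlinarith
    have h2 : (b-a) * FA k c ≤ (U * (((k:ℝ)+1)*‖c‖)) * (b-a) := by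
      rw [← hup]
      refine le_trans (le_abs_self _) ?_
      rw [← abs_of_pos hba]
      exact hbound
    nlinarith
  have hcle : ((k:ℝ)+1) * ‖c‖ ≤ ((k:ℝ)+1)^2/m * U := by
    rcases eq_or_lt_of_le (norm_nonneg c) with h|h
    · rw [← h, mul_zero]
      exact mul_nonneg (by positivity) hU0
    · have h' : (m * ‖c‖) * ‖c‖ ≤ (U * ((k:ℝ)+1)) * ‖c‖ := by nlinarith
      have h'' : m * ‖c‖ ≤ U * ((k:ℝ)+1) := le_of_mul_le_mul_right h' h
      rw [div_mul_eq_mul_div, le_div_iff₀ hm]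
      nlinarith [mul_nonneg (show (0:ℝ) ≤ (k:ℝ)+1 by positivity) (sub_nonneg.mpr h'')]
  exact le_trans (real_biSup_le (by positivity) hpb) hcle
end
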